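/- Plane sections of a ternary affine quadric with non-square discriminant are irreducible: for all a, u, v ∈ ℚ³ with u and v linearly independent over ℚ, the polynomial P(s,t) := q(a + s·u + t·v) − m ∈ ℚ[s,t] is either a nonzero constant, or has total degree 2 and is irreducible in ℚ[s,t]. -/

import Mathlib

/-!
Write `q(x) = xᵀ G x` with `G` the Gram matrix. The section `P` has total degree at most `2`;
if it is neither a nonzero constant nor irreducible of degree `2`, then it is zero or has a
linear factor, so it vanishes on a rational line and the quadric `q = m` contains a rational
line `p + ℚ w`. Then `q(p) = m`, `B(p, w) = 0` and `q(w) = 0`. In the basis `p, w, p × w` the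
Gram matrix has determinant `-m b²` with `b = B(w, p × w)`, and this determinant is also
`det(M)² det G`; hence `-m det G = (m b / det M)²` is a square.
-/

open MvPolynomial

/-- The Gram matrix (over `ℚ`) of a quadratic form given as an integral
multivariate polynomial. -/
noncomputable def quadGram {n : ℕ} (q : MvPolynomial (Fin n) ℤ) :
    Matrix (Fin n) (Fin n) ℚ := fun i j =>
  if i = j then ((q.coeff (Finsupp.single i 2) : ℤ) : ℚ)
  else ((q.coeff (Finsupp.single i 1 + Finsupp.single j 1) : ℤ) : ℚ) / 2

open Matrix

namespace Finsupp

variable {σ : Type*} {d : σ →₀ ℕ}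

theorem eq_zero_or_exists_eq_single_of_degree_le_one (hd : d.degree ≤ 1) :
    d = 0 ∨ ∃ i, d = single i 1 := by
  classical
  rcases Nat.le_one_iff_eq_zero_or_eq_one.mp hd with h | h
  · exact Or.inl ((degree_eq_zero_iff d).mp h)
  obtain ⟨i, hi⟩ := Multiset.card_eq_one.mp (by rw [card_toMultiset]; exact h)
  refine Or.inr ⟨i, ?_⟩
  rw [← toMultiset_toFinsupp d, ← toMultiset_toFinsupp (single i 1), hi, toMultiset_single,
    one_nsmul]

theorem exists_eq_single_add_single_of_degree_eq_two (hd : d.degree = 2) :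
    ∃ i j, d = single i 1 + single j 1 := by
  classical
  obtain ⟨i, j, hij⟩ := Multiset.card_eq_two.mp (by rw [card_toMultiset]; exact hd)
  refine ⟨i, j, ?_⟩
  rw [← toMultiset_toFinsupp d, ← toMultiset_toFinsupp (single i 1 + single j 1), hij,
    toMultiset_add, toMultiset_single, toMultiset_single, one_nsmul, one_nsmul,
    Multiset.insert_eq_cons, Multiset.singleton_add]

end Finsupp

section quadGram

variable {n : ℕ}

theorem quadGram_zero : quadGram (0 : MvPolynomial (Fin n) ℤ) = 0 := by
  ext i j
  simp [quadGram]

theorem quadGram_add (p q : MvPolynomial (Fin n) ℤ) :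
    quadGram (p + q) = quadGram p + quadGram q := by
  ext i j
  simp only [quadGram, coeff_add, Int.cast_add, Matrix.add_apply]
  split_ifs <;> ring

theorem quadGram_isSymm (q : MvPolynomial (Fin n) ℤ) : (quadGram q).IsSymm := by
  ext i j
  simp only [transpose_apply, quadGram, eq_comm (a := j), add_comm (Finsupp.single j 1)]
  split_ifs with h
  · rw [h]
  · rfl

theorem quadGram_monomial_single_add_single (i j : Fin n) (c : ℤ) :
    quadGram (monomial (Finsupp.single i 1 + Finsupp.single j 1) c) =
      ((c : ℚ) / 2) • (single i j 1 + single j i 1) := by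
  ext k l
  have h2 : Finsupp.single k 2 = Finsupp.single k 1 + Finsupp.single k 1 := by
    rw [← Finsupp.single_add]
  simp only [quadGram, h2, coeff_monomial,
    Finsupp.single_add_single_eq_single_add_single one_ne_zero one_ne_zero]
  simp only [Matrix.smul_apply, Matrix.add_apply, single_apply, smul_eq_mul]
  split_ifs <;> grind

theorem aeval_monomial_single_add_single (i j : Fin n) (c : ℤ) (x : Fin n → ℚ) :
    aeval x (monomial (Finsupp.single i 1 + Finsupp.single j 1) c) =
      x ⬝ᵥ quadGram (monomial (Finsupp.single i 1 + Finsupp.single j 1) c) *ᵥ x := by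
  have hX : monomial (Finsupp.single i 1 + Finsupp.single j 1) c = C c * X i * X j := by
    rw [X, X, C_mul_monomial, monomial_mul, mul_one, mul_one]
  rw [quadGram_monomial_single_add_single, hX]
  simp only [smul_add, add_mulVec, dotProduct_add, smul_single, single_mulVec,
    ← Pi.single.eq_1, dotProduct_single, smul_eq_mul, mul_one, map_mul, aeval_C, aeval_X,
    algebraMap_int_eq, Int.coe_castRingHom]
  ring

theorem aeval_eq_dotProduct_quadGram {q : MvPolynomial (Fin n) ℤ} (hq : q.IsHomogeneous 2)
    (x : Fin n → ℚ) : aeval x q = x ⬝ᵥ quadGram q *ᵥ x := by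
  rw [q.as_sum]
  refine Finset.sum_induction _ (fun p => aeval x p = x ⬝ᵥ quadGram p *ᵥ x) ?_ ?_ ?_
  · intro p p' hp hp'
    rw [map_add, hp, hp', quadGram_add, add_mulVec, dotProduct_add]
  · simp [quadGram_zero]
  · intro d hd
    have hd2 : d.degree = 2 := by
      rw [Finsupp.degree_eq_weight_one]
      exact hq (mem_support_iff.mp hd)
    obtain ⟨i, j, rfl⟩ := Finsupp.exists_eq_single_add_single_of_degree_eq_two hd2
    exact aeval_monomial_single_add_single i j _ x

end quadGram

theorem Matrix.mul_mul_transpose_apply {n R : Type*} [Fintype n] [CommSemiring R]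
    (M G : Matrix n n R) (i j : n) : (M * G * Mᵀ) i j = M i ⬝ᵥ G *ᵥ M j := by
  simp only [mul_apply, transpose_apply, dotProduct, mulVec, Finset.sum_mul, Finset.mul_sum]
  rw [Finset.sum_comm]
  simp only [mul_assoc]

namespace Matrix.IsSymm

theorem dotProduct_mulVec_comm {n R : Type*} [Fintype n] [CommSemiring R]
    {G : Matrix n n R} (hG : G.IsSymm) (x y : n → R) : x ⬝ᵥ G *ᵥ y = y ⬝ᵥ G *ᵥ x := by
  rw [dotProduct_mulVec, ← mulVec_transpose, hG.eq, dotProduct_comm]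

theorem add_smul_dotProduct_mulVec_add_smul {n R : Type*} [Fintype n] [CommRing R]
    {G : Matrix n n R} (hG : G.IsSymm) (p w : n → R) (r : R) :
    (p + r • w) ⬝ᵥ G *ᵥ (p + r • w) =
      p ⬝ᵥ G *ᵥ p + 2 * r * (p ⬝ᵥ G *ᵥ w) + r ^ 2 * (w ⬝ᵥ G *ᵥ w) := by
  simp only [mulVec_add, mulVec_smul, dotProduct_add, add_dotProduct, dotProduct_smul,
    smul_dotProduct, hG.dotProduct_mulVec_comm w p, smul_eq_mul]
  ring

variable {K : Type*} [Field K] [LinearOrder K] [IsStrictOrderedRing K]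
  {G : Matrix (Fin 3) (Fin 3) K} {m : K} {p w : Fin 3 → K}

theorem isSquare_neg_mul_det_of_isotropic (hG : G.IsSymm) (hw : w ≠ 0)
    (hpp : p ⬝ᵥ G *ᵥ p = m) (hpw : p ⬝ᵥ G *ᵥ w = 0) (hww : w ⬝ᵥ G *ᵥ w = 0) :
    IsSquare (-m * G.det) := by
  rcases eq_or_ne m 0 with rfl | hm
  · simp
  have hli : LinearIndependent K ![p, w] := by
    refine LinearIndependent.pair_iff.mpr fun s t hst => ?_
    have hs : s * m = 0 := by
      simpa [add_dotProduct, hpp, hG.dotProduct_mulVec_comm w p, hpw] using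
        congrArg (· ⬝ᵥ G *ᵥ p) hst
    obtain rfl : s = 0 := (mul_eq_zero.mp hs).resolve_right hm
    simpa [hw] using hst
  set M : Matrix (Fin 3) (Fin 3) K := ![p, w, p ⨯₃ w]
  -- `det M` is the triple product `(p × w) ⬝ (p × w)`, positive over an ordered field
  have hM : M.det ≠ 0 := by
    rw [← triple_product_eq_det, triple_product_permutation, triple_product_permutation]
    exact fun h => crossProduct_ne_zero_iff_linearIndependent.mpr hli
      (dotProduct_self_eq_zero.mp h)
  have hdet : (M * G * Mᵀ).det = M.det ^ 2 * G.det := by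
    rw [det_mul, det_mul, det_transpose]
    ring
  have hdet' : (M * G * Mᵀ).det = -m * (w ⬝ᵥ G *ᵥ (p ⨯₃ w)) ^ 2 := by
    rw [det_fin_three]
    simp only [mul_mul_transpose_apply]
    simp only [M, cons_val_zero, cons_val_one, cons_val]
    rw [hG.dotProduct_mulVec_comm w p, hG.dotProduct_mulVec_comm (p ⨯₃ w) w, hpp, hpw, hww]
    ring
  refine ⟨m * (w ⬝ᵥ G *ᵥ (p ⨯₃ w)) / M.det, ?_⟩
  field_simp
  linear_combination hdet - hdet'

theorem isSquare_neg_mul_det_of_line_in_level_set (hG : G.IsSymm) (hw : w ≠ 0)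
    (hline : ∀ r : K, (p + r • w) ⬝ᵥ G *ᵥ (p + r • w) = m) : IsSquare (-m * G.det) := by
  have h r := (hG.add_smul_dotProduct_mulVec_add_smul p w r).symm.trans (hline r)
  refine hG.isSquare_neg_mul_det_of_isotropic hw (by simpa using h 0) ?_ ?_
  · linear_combination (h 1 - h (-1)) / 4
  · linear_combination (h 1 + h (-1) - 2 * h 0) / 2

end Matrix.IsSymm

namespace MvPolynomial

theorem eval_aeval {σ τ R S : Type*} [CommSemiring R] [CommSemiring S] [Algebra R S]
    (f : σ → MvPolynomial τ S) (s : τ → S) (q : MvPolynomial σ R) :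
    eval s (aeval f q) = aeval (fun i => eval s (f i)) q :=
  comp_aeval_apply (f := f) ((aeval s).restrictScalars R) q

theorem totalDegree_aeval_le {σ τ R S : Type*} [CommSemiring R] [CommSemiring S]
    [Algebra R S] (φ : MvPolynomial σ R) {x : σ → MvPolynomial τ S}
    (hx : ∀ i, (x i).totalDegree ≤ 1) : (aeval x φ).totalDegree ≤ φ.totalDegree := by
  rw [aeval_def, eval₂_eq]
  refine totalDegree_finsetSum_le fun d hd => ?_
  calc _ ≤ (algebraMap R (MvPolynomial τ S) (coeff d φ)).totalDegree +
        (∏ i ∈ d.support, x i ^ d i).totalDegree := totalDegree_mul _ _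
    _ ≤ 0 + ∑ i ∈ d.support, d i * 1 := by
        gcongr
        · rw [algebraMap_apply, totalDegree_C]
        · exact (totalDegree_finsetProd _ _).trans
            (Finset.sum_le_sum fun i _ => (totalDegree_pow _ _).trans (by gcongr; exact hx i))
    _ ≤ φ.totalDegree := by
        simp only [zero_add, mul_one]
        exact le_totalDegree hd

theorem totalDegree_C_add_C_mul_X_add_C_mul_X_le {σ R : Type*} [CommSemiring R]
    (c a b : R) (i j : σ) : (C c + C a * X i + C b * X j).totalDegree ≤ 1 := by
  refine (totalDegree_add _ _).trans (max_le ((totalDegree_add _ _).trans (max_le ?_ ?_)) ?_)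
  · simp
  all_goals
    rw [C_mul_X_eq_monomial]
    exact (totalDegree_monomial_le _ _).trans (by simp)

theorem eq_C_add_sum_C_mul_X_of_totalDegree_le_one {σ R : Type*} [Fintype σ] [CommSemiring R]
    {L : MvPolynomial σ R} (hL : L.totalDegree ≤ 1) :
    L = C (coeff 0 L) + ∑ i, C (coeff (Finsupp.single i 1) L) * X i := by
  classical
  ext d
  simp only [coeff_add, coeff_sum, coeff_C, coeff_C_mul, coeff_X]
  by_cases hd : d.degree ≤ 1
  · rcases Finsupp.eq_zero_or_exists_eq_single_of_degree_le_one hd with rfl | ⟨j, rfl⟩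
    · simp
    · simp [Finsupp.single_left_inj one_ne_zero, eq_comm (a := (0 : σ →₀ ℕ))]
  · have hL0 : coeff d L = 0 := coeff_eq_zero_of_totalDegree_lt (by
      rw [← Finsupp.degree_apply]; omega)
    have h0 : (0 : σ →₀ ℕ) ≠ d := by rintro rfl; simp at hd
    have h1 : ∀ i, Finsupp.single i 1 ≠ d := by rintro i rfl; simp at hd
    simp [hL0, h0, h1]

variable {σ K : Type*} [Field K]

theorem isUnit_of_totalDegree_eq_zero {f : MvPolynomial σ K} (hf : f ≠ 0)
    (h : f.totalDegree = 0) : IsUnit f := by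
  rw [totalDegree_eq_zero_iff_eq_C] at h
  rw [h] at hf ⊢
  exact (isUnit_iff_ne_zero.mpr fun h0 => hf (by rw [h0, map_zero])).map C

def VanishesOnLine (P : MvPolynomial σ K) : Prop :=
  ∃ p w : σ → K, w ≠ 0 ∧ ∀ r : K, eval (p + r • w) P = 0

theorem VanishesOnLine.of_dvd {L P : MvPolynomial σ K} (hLP : L ∣ P) (hL : L.VanishesOnLine) :
    P.VanishesOnLine := by
  obtain ⟨M, rfl⟩ := hLP
  obtain ⟨p, w, hw, hLw⟩ := hL
  exact ⟨p, w, hw, fun r => by rw [eval_mul, hLw, zero_mul]⟩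

theorem vanishesOnLine_of_totalDegree_eq_one {L : MvPolynomial (Fin 2) K}
    (hL : L.totalDegree = 1) : L.VanishesOnLine := by
  have hrep := eq_C_add_sum_C_mul_X_of_totalDegree_le_one hL.le
  rw [Fin.sum_univ_two] at hrep
  set c := coeff 0 L
  set a := coeff (Finsupp.single 0 1) L
  set b := coeff (Finsupp.single 1 1) L
  have hab : a ≠ 0 ∨ b ≠ 0 := by
    by_contra! h
    rw [h.1, h.2] at hrep
    simp [hrep] at hL
  have heval (x : Fin 2 → K) : eval x L = c + a * x 0 + b * x 1 := by
    rw [hrep]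
    simp [add_assoc]
  obtain ⟨p, hp⟩ : ∃ p : Fin 2 → K, c + a * p 0 + b * p 1 = 0 := by
    rcases hab with ha | hb
    · refine ⟨![-c / a, 0], ?_⟩
      simp only [cons_val_zero, cons_val_one, cons_val_fin_one]
      field_simp
      ring
    · refine ⟨![0, -c / b], ?_⟩
      simp only [cons_val_zero, cons_val_one, cons_val_fin_one]
      field_simp
      ring
  refine ⟨p, ![b, -a], ?_, fun r => ?_⟩
  · intro hw
    have h0 := congrFun hw 0
    have h1 := congrFun hw 1
    simp only [cons_val_zero, cons_val_one, Pi.zero_apply, neg_eq_zero] at h0 h1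
    tauto
  · rw [heval]
    simp only [Pi.add_apply, Pi.smul_apply, smul_eq_mul, cons_val_zero, cons_val_one]
    linear_combination hp

theorem totalDegree_eq_zero_or_irreducible_of_not_vanishesOnLine
    {P : MvPolynomial (Fin 2) K} (hP : P.totalDegree ≤ 2) (hline : ¬ P.VanishesOnLine) :
    (P ≠ 0 ∧ P.totalDegree = 0) ∨ (P.totalDegree = 2 ∧ Irreducible P) := by
  have hP0 : P ≠ 0 := by
    rintro rfl
    exact hline ⟨0, ![1, 0], by simp, fun r => map_zero _⟩
  have hdvd (L : MvPolynomial (Fin 2) K) (hLP : L ∣ P) : L.totalDegree ≠ 1 :=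
    fun hL => hline ((vanishesOnLine_of_totalDegree_eq_one hL).of_dvd hLP)
  interval_cases h : P.totalDegree
  · exact Or.inl ⟨hP0, rfl⟩
  · exact absurd h (hdvd P dvd_rfl)
  refine Or.inr ⟨rfl, ⟨fun hu => ?_, fun f g hfg => ?_⟩⟩
  · simp [(isUnit_iff_totalDegree_of_isReduced.mp hu).2] at h
  have hf : f ≠ 0 := by rintro rfl; exact hP0 (by simpa using hfg)
  have hg : g ≠ 0 := by rintro rfl; exact hP0 (by simpa using hfg)
  have hsum : f.totalDegree + g.totalDegree = 2 := by
    rw [← totalDegree_mul_of_isDomain hf hg, ← hfg, h]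
  have hf1 := hdvd f (hfg ▸ dvd_mul_right f g)
  have hg1 := hdvd g (hfg ▸ dvd_mul_left g f)
  rcases Nat.eq_zero_or_pos f.totalDegree with hf0 | hf0
  · exact Or.inl (isUnit_of_totalDegree_eq_zero hf hf0)
  · exact Or.inr (isUnit_of_totalDegree_eq_zero hg (by omega))

end MvPolynomial

theorem plane_sections_irreducible_general
    (q : MvPolynomial (Fin 3) ℤ) (hq : q.IsHomogeneous 2)
    (m : ℤ)
    (hsq : ¬ IsSquare (-(m : ℚ) * (quadGram q).det)) :
    ∀ a u v : Fin 3 → ℚ, LinearIndependent ℚ ![u, v] →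
      (let P : MvPolynomial (Fin 2) ℚ :=
        aeval (fun i : Fin 3 =>
          C (a i) + C (u i) * X 0 + C (v i) * X 1) q - C (m : ℚ);
      (P ≠ 0 ∧ P.totalDegree = 0) ∨ (P.totalDegree = 2 ∧ Irreducible P)) := by
  intro a u v huv P
  have hdeg : P.totalDegree ≤ 2 := (totalDegree_sub_C_le _ _).trans
    ((totalDegree_aeval_le q fun i => totalDegree_C_add_C_mul_X_add_C_mul_X_le _ _ _ _ _).trans
      hq.totalDegree_le)
  refine totalDegree_eq_zero_or_irreducible_of_not_vanishesOnLine hdeg ?_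
  rintro ⟨p, w, hw, hzero⟩
  refine hsq ((quadGram_isSymm q).isSquare_neg_mul_det_of_line_in_level_set
    (p := a + p 0 • u + p 1 • v) (w := w 0 • u + w 1 • v) ?_ fun r => ?_)
  · intro h
    obtain ⟨h0, h1⟩ := LinearIndependent.pair_iff.mp huv _ _ h
    exact hw (by ext i; fin_cases i <;> simp [h0, h1])
  · rw [← aeval_eq_dotProduct_quadGram hq, ← sub_eq_zero, ← hzero r, eval_sub, eval_C,
      eval_aeval]
    congr 3
    funext i
    simp only [eval_add, eval_mul, eval_C, eval_X, Pi.add_apply, Pi.smul_apply, smul_eq_mul]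
    ring

/-- Plane sections of a ternary affine quadric with non-square discriminant
are irreducible. -/
theorem plane_sections_irreducible
    (q : MvPolynomial (Fin 3) ℤ) (hq : q.IsHomogeneous 2)
    (hnd : (quadGram q).det ≠ 0)
    (m : ℤ) (hm : m ≠ 0)
    (hsq : ¬ IsSquare (-(m : ℚ) * (quadGram q).det))
    (hrat : ∃ x : Fin 3 → ℚ, aeval x q = (m : ℚ)) :
    ∀ a u v : Fin 3 → ℚ, LinearIndependent ℚ ![u, v] →
      (let P : MvPolynomial (Fin 2) ℚ :=
        aeval (fun i : Fin 3 =>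
          C (a i) + C (u i) * X 0 + C (v i) * X 1) q - C (m : ℚ);
      (P ≠ 0 ∧ P.totalDegree = 0) ∨ (P.totalDegree = 2 ∧ Irreducible P)) :=
  plane_sections_irreducible_general q hq m hsq
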